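/- arXiv:math/9906070 — 3 statements merged into one kernel-verified Lean document; each statement's English description precedes it below -/
import Mathlib

section
/- Let a, b ∈ A and r, s ∈ G, and suppose that for every f ∈ C_c(G; A) and every t ∈ G one has a·f(r⁻¹t) = b·f(s⁻¹t). Then either r = s and a = b, or else a = 0 and b = 0. (This is Lemma 1.4, the faithfulness of the multiplier map m : B → M(C*(ℬ)), m_a(f)(t) = a·f(π(a)⁻¹t), in the case of the constant bundle with fibre A.) -/
/-!
Evaluating the identity at `t = r` on a compactly supported `f` with `f 1 = c` (a real bump
times `c`) that vanishes at `s⁻¹ r` gives `a * c = 0` for every `c` when `r ≠ s`, and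
`a * c = b * c` when `r = s`. In a C*-ring `x * x⋆ = 0` forces `x = 0`, so taking `c = a⋆`,
resp. `c = (a - b)⋆`, concludes.
-/

open Set

lemma exists_continuous_hasCompactSupport_eq_and_eqOn_zero {X E : Type*} [TopologicalSpace X]
    [RegularSpace X] [LocallyCompactSpace X] [TopologicalSpace E] [AddCommGroup E] [Module ℝ E]
    [ContinuousSMul ℝ E] {t : Set X} (ht : IsClosed t) {x : X} (hx : x ∉ t) (c : E) :
    ∃ f : X → E, Continuous f ∧ HasCompactSupport f ∧ f x = c ∧ EqOn f 0 t := by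
  obtain ⟨φ, hφ1, hφ0, hφc, -⟩ :=
    exists_continuous_one_zero_of_isCompact isCompact_singleton ht (disjoint_singleton_left.mpr hx)
  refine ⟨fun y => φ y • c, φ.continuous.smul continuous_const, hφc.smul_right, ?_, ?_⟩
  · simp [hφ1 (mem_singleton x)]
  · intro y hy
    simp [hφ0 hy]

lemma CStarRing.eq_zero_of_forall_mul_eq_zero {A : Type*} [NonUnitalNormedRing A] [StarRing A]
    [CStarRing A] {a : A} (h : ∀ c, a * c = 0) : a = 0 :=
  (CStarRing.mul_star_self_eq_zero_iff a).mp (h (star a))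

lemma CStarRing.eq_of_forall_mul_eq_mul {A : Type*} [NonUnitalNormedRing A] [StarRing A]
    [CStarRing A] {a b : A} (h : ∀ c, a * c = b * c) : a = b :=
  sub_eq_zero.mp <| CStarRing.eq_zero_of_forall_mul_eq_zero fun c => by rw [sub_mul, h, sub_self]

section Translates

variable {G A : Type*} [Group G] [TopologicalSpace G] [LocallyCompactSpace G] [T2Space G]
  [NonUnitalRing A] [TopologicalSpace A] [Module ℝ A] [ContinuousSMul ℝ A]

lemma forall_mul_eq_zero_of_forall_mul_translate_eq {a b : A} {r s : G} (hrs : r ≠ s)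
    (h : ∀ f : G → A, Continuous f → HasCompactSupport f →
      ∀ t : G, a * f (r⁻¹ * t) = b * f (s⁻¹ * t)) (c : A) :
    a * c = 0 := by
  have hne : (1 : G) ∉ ({s⁻¹ * r} : Set G) := fun h1 => hrs (inv_mul_eq_one.mp h1.symm).symm
  obtain ⟨f, hf, hfc, hf1, hf0⟩ :=
    exists_continuous_hasCompactSupport_eq_and_eqOn_zero isClosed_singleton hne c
  simpa [hf1, hf0 (mem_singleton _)] using h f hf hfc r

lemma forall_mul_eq_mul_of_forall_mul_translate_eq {a b : A} {r : G}
    (h : ∀ f : G → A, Continuous f → HasCompactSupport f →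
      ∀ t : G, a * f (r⁻¹ * t) = b * f (r⁻¹ * t)) (c : A) :
    a * c = b * c := by
  obtain ⟨f, hf, hfc, hf1, -⟩ :=
    exists_continuous_hasCompactSupport_eq_and_eqOn_zero isClosed_empty (notMem_empty (1 : G)) c
  simpa [hf1] using h f hf hfc r

end Translates

theorem stmt_3_general
    {G : Type*} [Group G] [TopologicalSpace G]
    [LocallyCompactSpace G] [T2Space G]
    {A : Type*} [NonUnitalNormedRing A] [StarRing A] [CStarRing A]
    [NormedSpace ℂ A]
    (a b : A) (r s : G)
    (h : ∀ f : G → A, Continuous f → HasCompactSupport f →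
      ∀ t : G, a * f (r⁻¹ * t) = b * f (s⁻¹ * t)) :
    (r = s ∧ a = b) ∨ (a = 0 ∧ b = 0) := by
  rcases eq_or_ne r s with rfl | hrs
  · exact Or.inl ⟨rfl, CStarRing.eq_of_forall_mul_eq_mul
      (forall_mul_eq_mul_of_forall_mul_translate_eq h)⟩
  · have h' : ∀ f : G → A, Continuous f → HasCompactSupport f →
        ∀ t : G, b * f (s⁻¹ * t) = a * f (r⁻¹ * t) := fun f hf hfc t => (h f hf hfc t).symm
    exact Or.inr ⟨CStarRing.eq_zero_of_forall_mul_eq_zero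
        (forall_mul_eq_zero_of_forall_mul_translate_eq hrs h),
      CStarRing.eq_zero_of_forall_mul_eq_zero
        (forall_mul_eq_zero_of_forall_mul_translate_eq hrs.symm h')⟩

/-- Lemma 1.4, faithfulness of the multiplier map
`m : B → M(C*(ℬ))`, `m_a(f)(t) = a · f(π(a)⁻¹ t)`, for the constant bundle with fibre `A`.
If `a · f(r⁻¹t) = b · f(s⁻¹t)` for every `f ∈ C_c(G; A)` and every `t ∈ G`, then either
`r = s` and `a = b`, or `a = 0` and `b = 0`. -/
theorem stmt_3
    {G : Type*} [Group G] [TopologicalSpace G] [IsTopologicalGroup G]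
    [LocallyCompactSpace G] [T2Space G]
    {A : Type*} [NonUnitalNormedRing A] [StarRing A] [CStarRing A]
    [NormedSpace ℂ A] [IsScalarTower ℂ A A] [SMulCommClass ℂ A A]
    [StarModule ℂ A] [CompleteSpace A]
    (a b : A) (r s : G)
    (h : ∀ f : G → A, Continuous f → HasCompactSupport f →
      ∀ t : G, a * f (r⁻¹ * t) = b * f (s⁻¹ * t)) :
    (r = s ∧ a = b) ∨ (a = 0 ∧ b = 0) :=
  stmt_3_general a b r s h
end

section
/- Let X be a complex Banach space, let f ∈ C_c(G; X) and k ∈ C_c(G; ℂ), and let ε > 0. Then there exist finitely many functions g_1, …, g_n ∈ C_c(G; ℂ) and points r_1, …, r_n ∈ G such that ∫_G ∫_G ‖ f(r)k(r⁻¹s) − Σ_{i=1}^n g_i(r) f(r) k(r_i⁻¹ s) ‖ dμ(s) dμ(r) ≤ ε. In particular, the function (r,s) ↦ f(r)k(r⁻¹s) lies in the closure, with respect to the L¹(μ×μ) norm, of the linear span of elementary tensors (r,s) ↦ h(r)l(s) with h ∈ C_c(G; X) and l ∈ C_c(G; ℂ). (This is the approximation established in the proof of Lemma 1.6, showing the set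 N = {Σ f_i • k_i} is dense.) -/
/-!
Right uniform continuity of `k` gives a neighbourhood `V` of `1` with `‖k (w * x) - k x‖ ≤ δ`
for `w ∈ V`. Cover `tsupport f` by finitely many translates `rᵢ • V⁻¹` and take a partition of
unity `gᵢ` subordinate to this cover. For `r ∈ tsupport f`, `k (r⁻¹ * s) - ∑ gᵢ(r) k (rᵢ⁻¹ * s)`
is then a convex combination of differences of norm `≤ δ`, and it vanishes unless
`s ∈ tsupport f * tsupport k`, a compact set. Hence the double integral is at most
`δ · μ(tsupport f * tsupport k) · ‖f‖₁`.
-/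

open MeasureTheory Set Topology Pointwise

theorem norm_sub_sum_smul_le_of_sum_eq_one {ι E : Type*} [SeminormedAddCommGroup E]
    [NormedSpace ℝ E] {t : Finset ι} {w : ι → ℝ} {a : E} {b : ι → E} {δ : ℝ}
    (hw₀ : ∀ i ∈ t, 0 ≤ w i) (hw₁ : ∑ i ∈ t, w i = 1)
    (hb : ∀ i ∈ t, w i ≠ 0 → ‖a - b i‖ ≤ δ) :
    ‖a - ∑ i ∈ t, w i • b i‖ ≤ δ := by
  have hsplit : a - ∑ i ∈ t, w i • b i = ∑ i ∈ t, w i • (a - b i) := by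
    simp only [smul_sub, Finset.sum_sub_distrib, ← Finset.sum_smul, hw₁, one_smul]
  calc ‖a - ∑ i ∈ t, w i • b i‖
      ≤ ∑ i ∈ t, w i * ‖a - b i‖ := by
        rw [hsplit]
        refine (norm_sum_le _ _).trans_eq (Finset.sum_congr rfl fun i hi => ?_)
        rw [norm_smul, Real.norm_of_nonneg (hw₀ i hi)]
    _ ≤ ∑ i ∈ t, w i * δ := by
        refine Finset.sum_le_sum fun i hi => ?_
        rcases eq_or_ne (w i) 0 with h | h
        · simp [h]
        · exact mul_le_mul_of_nonneg_left (hb i hi h) (hw₀ i hi)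
    _ = δ := by rw [← Finset.sum_mul, hw₁, one_mul]

theorem integral_integral_le_of_le_indicator {α β : Type*} [MeasurableSpace α]
    [MeasurableSpace β] {μ : Measure α} {ν : Measure β} {F : α → β → ℝ} {a : α → ℝ}
    {S : Set β} (hS : MeasurableSet S) (hνS : ν S ≠ ⊤) (ha : Integrable a μ)
    (hF₀ : ∀ r s, 0 ≤ F r s) (hF : ∀ r s, F r s ≤ S.indicator (fun _ => a r) s) :
    ∫ r, ∫ s, F r s ∂ν ∂μ ≤ ν.real S * ∫ r, a r ∂μ := by
  have hinner : ∀ r, ∫ s, F r s ∂ν ≤ ν.real S * a r := fun r =>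
    calc ∫ s, F r s ∂ν
        ≤ ∫ s, S.indicator (fun _ => a r) s ∂ν :=
          integral_mono_of_nonneg (.of_forall (hF₀ r))
            ((integrableOn_const hνS).integrable_indicator hS) (.of_forall (hF r))
      _ = ν.real S * a r := by rw [integral_indicator_const _ hS, smul_eq_mul]
  calc ∫ r, ∫ s, F r s ∂ν ∂μ
      ≤ ∫ r, ν.real S * a r ∂μ :=
        integral_mono_of_nonneg (.of_forall fun r => integral_nonneg (hF₀ r))
          (ha.const_mul _) (.of_forall hinner)
    _ = ν.real S * ∫ r, a r ∂μ := integral_const_mul _ _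

section TopologicalGroup

variable {G : Type*} [Group G] [TopologicalSpace G]

theorem apply_inv_mul_eq_zero_of_notMem_mul_tsupport {M : Type*} [Zero M] {k : G → M}
    {K : Set G} {r s : G} (hr : r ∈ K) (hs : s ∉ K * tsupport k) : k (r⁻¹ * s) = 0 := by
  by_contra h
  exact hs (by simpa using Set.mul_mem_mul hr (subset_tsupport k h))

variable [IsTopologicalGroup G]

theorem HasCompactSupport.exists_nhds_one_norm_apply_mul_sub_le {E : Type*}
    [SeminormedAddCommGroup E] {k : G → E} (hk : HasCompactSupport k) (hkc : Continuous k)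
    {δ : ℝ} (hδ : 0 < δ) : ∃ V ∈ 𝓝 (1 : G), ∀ w ∈ V, ∀ x, ‖k (w * x) - k x‖ ≤ δ := by
  let : UniformSpace G := IsTopologicalGroup.rightUniformSpace G
  have hmem := hk.uniformContinuous_of_continuous hkc (Metric.dist_mem_uniformity hδ)
  rw [uniformity_eq_comap_nhds_one'] at hmem
  obtain ⟨V, hV, hVsub⟩ := Filter.mem_comap.mp hmem
  refine ⟨V, hV, fun w hw x => ?_⟩
  have hx : ((x, w * x) : G × G) ∈ (fun p : G × G => p.2 * p.1⁻¹) ⁻¹' V := by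
    simpa [mul_assoc] using hw
  have := hVsub hx
  simp only [Set.mem_preimage, Set.mem_ofPred_eq, dist_eq_norm'] at this
  exact this.le

variable [T2Space G] [LocallyCompactSpace G]

theorem IsCompact.exists_partition_of_unity_translates {K W : Set G} (hK : IsCompact K)
    (hW : IsOpen W) (h1W : (1 : G) ∈ W) :
    ∃ (n : ℕ) (p : Fin n → G) (g : Fin n → C(G, ℝ)), (∀ i, p i ∈ K) ∧
      (∀ i, tsupport (g i) ⊆ p i • W) ∧ EqOn (∑ i, g i) 1 K ∧
      (∀ i x, 0 ≤ g i x) ∧ ∀ i, HasCompactSupport (g i) := by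
  have hcover : K ⊆ ⋃ r ∈ K, r • W := fun r hr =>
    Set.mem_biUnion hr (Set.mem_smul_set.2 ⟨1, h1W, mul_one r⟩)
  obtain ⟨b, hbK, hbfin, hbcover⟩ :=
    hK.elim_finite_subcover_image (fun r _ => hW.smul r) hcover
  obtain ⟨n, p, rfl⟩ := hbfin.fin_embedding
  obtain ⟨g, hgW, hgsum, hg01, hgc⟩ := exists_continuous_sum_one_of_isOpen_isCompact
    (fun i => hW.smul (p i)) hK (by simpa [Set.biUnion_range] using hbcover)
  exact ⟨n, p, g, fun i => hbK (Set.mem_range_self i), hgW, hgsum,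
    fun i x => (hg01 i x).1, hgc⟩

theorem HasCompactSupport.exists_norm_sub_sum_smul_translate_le {E : Type*}
    [SeminormedAddCommGroup E] [NormedSpace ℝ E] {k : G → E} (hk : HasCompactSupport k)
    (hkc : Continuous k) {K : Set G} (hK : IsCompact K) {δ : ℝ} (hδ : 0 < δ) :
    ∃ (n : ℕ) (p : Fin n → G) (g : Fin n → G → ℝ),
      (∀ i, Continuous (g i) ∧ HasCompactSupport (g i)) ∧
      ∀ r ∈ K, ∀ s, ‖k (r⁻¹ * s) - ∑ i, g i r • k ((p i)⁻¹ * s)‖ ≤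
        (K * tsupport k).indicator (fun _ => δ) s := by
  obtain ⟨V, hV, hVk⟩ := hk.exists_nhds_one_norm_apply_mul_sub_le hkc hδ
  have h1W : (1 : G) ∈ interior V⁻¹ := mem_interior_iff_mem_nhds.2 (inv_mem_nhds_one G hV)
  obtain ⟨n, p, g, hpK, hgW, hgsum, hg₀, hgc⟩ :=
    hK.exists_partition_of_unity_translates isOpen_interior h1W
  refine ⟨n, p, fun i => g i, fun i => ⟨(g i).continuous, hgc i⟩, fun r hr s => ?_⟩
  by_cases hs : s ∈ K * tsupport k
  · rw [Set.indicator_of_mem hs]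
    refine norm_sub_sum_smul_le_of_sum_eq_one (fun i _ => hg₀ i r)
      (by simpa using hgsum hr) fun i _ hi => ?_
    -- `r = p i * w` with `w⁻¹ ∈ V`, so `k (r⁻¹ * s)` is the `w⁻¹`-translate of `k ((p i)⁻¹ * s)`.
    obtain ⟨w, hw, rfl⟩ := Set.mem_smul_set.1 (hgW i (subset_tsupport _ hi))
    have hwV : w⁻¹ ∈ V := Set.mem_inv.1 (interior_subset hw)
    simpa [mul_assoc] using hVk w⁻¹ hwV ((p i)⁻¹ * s)
  · simp [Set.indicator_of_notMem hs, apply_inv_mul_eq_zero_of_notMem_mul_tsupport hr hs,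
      fun i => apply_inv_mul_eq_zero_of_notMem_mul_tsupport (hpK i) hs]

end TopologicalGroup

theorem stmt_4_general
    {G : Type*} [Group G] [TopologicalSpace G] [IsTopologicalGroup G]
    [LocallyCompactSpace G] [T2Space G] [MeasurableSpace G] [BorelSpace G]
    (μ : Measure G) [μ.IsHaarMeasure]
    {X : Type*} [NormedAddCommGroup X] [NormedSpace ℂ X]
    (f : G → X) (hfc : Continuous f) (hfs : HasCompactSupport f)
    (k : G → ℂ) (hkc : Continuous k) (hks : HasCompactSupport k)
    (ε : ℝ) (hε : 0 < ε) :
    ∃ (n : ℕ) (g : Fin n → G → ℂ) (p : Fin n → G),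
      (∀ i, Continuous (g i) ∧ HasCompactSupport (g i)) ∧
      (∫ r, ∫ s, ‖k (r⁻¹ * s) • f r -
          ∑ i, (g i r * k ((p i)⁻¹ * s)) • f r‖ ∂μ ∂μ) ≤ ε := by
  set S := tsupport f * tsupport k
  have hS : IsCompact S := hfs.mul hks
  set C := ∫ r, ‖f r‖ ∂μ
  have hD : 0 < μ.real S * C + 1 := by positivity
  set δ := ε / (μ.real S * C + 1)
  obtain ⟨n, p, g, hg, happrox⟩ := hks.exists_norm_sub_sum_smul_translate_le hkc hfs
    (div_pos hε hD)
  refine ⟨n, fun i r => g i r, p, fun i => ⟨Complex.continuous_ofReal.comp (hg i).1,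
    (hg i).2.comp_left Complex.ofReal_zero⟩, ?_⟩
  have hpointwise : ∀ r s, ‖k (r⁻¹ * s) • f r - ∑ i, ((g i r : ℂ) * k ((p i)⁻¹ * s)) • f r‖ ≤
      S.indicator (fun _ => δ * ‖f r‖) s := by
    intro r s
    simp only [← Complex.real_smul, ← Finset.sum_smul, ← sub_smul, norm_smul,
      Set.indicator_mul_left S (fun _ => δ) (fun _ => ‖f r‖)]
    by_cases hr : r ∈ tsupport f
    · exact mul_le_mul_of_nonneg_right (happrox r hr s) (norm_nonneg _)
    · simp [image_eq_zero_of_notMem_tsupport hr]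
  calc _ ≤ μ.real S * ∫ r, δ * ‖f r‖ ∂μ :=
        integral_integral_le_of_le_indicator hS.measurableSet hS.measure_lt_top.ne
          ((hfc.norm.integrable_of_hasCompactSupport hfs.norm).const_mul δ)
          (fun _ _ => norm_nonneg _) hpointwise
    _ = δ * (μ.real S * C) := by rw [integral_const_mul]; ring
    _ ≤ δ * (μ.real S * C + 1) := by gcongr; linarith
    _ = ε := div_mul_cancel₀ _ hD.ne'

/-- the approximation established in the proof of Lemma 1.6.
For `f ∈ C_c(G; X)`, `k ∈ C_c(G; ℂ)` and `ε > 0` there are `g₁, …, gₙ ∈ C_c(G; ℂ)` and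
points `r₁, …, rₙ ∈ G` with
`∫∫ ‖f(r)k(r⁻¹s) − Σᵢ gᵢ(r) f(r) k(rᵢ⁻¹s)‖ dμ(s) dμ(r) ≤ ε`. -/
theorem stmt_4
    {G : Type*} [Group G] [TopologicalSpace G] [IsTopologicalGroup G]
    [LocallyCompactSpace G] [T2Space G] [MeasurableSpace G] [BorelSpace G]
    (μ : Measure G) [μ.IsHaarMeasure]
    {X : Type*} [NormedAddCommGroup X] [NormedSpace ℂ X] [CompleteSpace X]
    (f : G → X) (hfc : Continuous f) (hfs : HasCompactSupport f)
    (k : G → ℂ) (hkc : Continuous k) (hks : HasCompactSupport k)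
    (ε : ℝ) (hε : 0 < ε) :
    ∃ (n : ℕ) (g : Fin n → G → ℂ) (p : Fin n → G),
      (∀ i, Continuous (g i) ∧ HasCompactSupport (g i)) ∧
      (∫ r, ∫ s, ‖k (r⁻¹ * s) • f r -
          ∑ i, (g i r * k ((p i)⁻¹ * s)) • f r‖ ∂μ ∂μ) ≤ ε :=
  stmt_4_general μ f hfc hfs k hkc hks ε hε
end

section
/- Let π : A → B(H) be a *-representation of A on a complex Hilbert space H. For all f, α, β ∈ C_c(G; A) and all ξ ∈ H one has ∫_G π(α(t))* ( ∫_G π(f(u)) π(β(u⁻¹t)) ξ dμ(u) ) dμ(t) = ∫_G π( (α·f·β)(s) ) ξ dμ(s), where (α·f·β)(s) = ∫_G α(t)* f(s) β(s⁻¹t) dμ(t). (This is the identity Ψ_{α,β}(μ_{λ,T}(f)) = μ_T(α·f·β) of Lemma 3.1, i.e. V_α* μ_{λ,T}(f) V_β equals the integrated representation of α·f·β, for the constant bundle with fibre A.) -/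
/-!
Both sides are the iterated integrals, in the two orders, of the continuous compactly supported
kernel `(t, u) ↦ π (star (α t) * f u * β (u⁻¹ * t)) ξ` on `G × G`. The inner integrals may be
pulled through `π` and `star (π (α t))` because a star homomorphism out of a C⋆-algebra is
automatically contractive, hence continuous; Fubini for compactly supported continuous functions
then needs no σ-finiteness of `μ`.
-/

open MeasureTheory

lemma HasCompactSupport.mul_prod {X Y R : Type*} [TopologicalSpace X] [TopologicalSpace Y]
    [MulZeroClass R] {a : X → R} {b : Y → R} (ha : HasCompactSupport a)
    (hb : HasCompactSupport b) : HasCompactSupport (fun p : X × Y ↦ a p.1 * b p.2) := by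
  refine (ha.prod hb).of_isClosed_subset (isClosed_tsupport _)
    (closure_minimal ?_ ((isClosed_tsupport a).prod (isClosed_tsupport b)))
  intro p hp
  exact ⟨subset_tsupport a (left_ne_zero_of_mul hp), subset_tsupport b (right_ne_zero_of_mul hp)⟩

open CStarAlgebra in
lemma NonUnitalStarAlgHom.continuous_of_cstarRing {A B : Type*} [NonUnitalNormedRing A]
    [StarRing A] [CStarRing A] [NormedSpace ℂ A] [IsScalarTower ℂ A A] [SMulCommClass ℂ A A]
    [StarModule ℂ A] [CompleteSpace A] [NonUnitalCStarAlgebra B] (π : A →⋆ₙₐ[ℂ] B) :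
    Continuous π :=
  letI : NonUnitalCStarAlgebra A := { }
  map_continuous π

section Sandwich

variable {G : Type*} [Group G] [TopologicalSpace G] {A : Type*} [NonUnitalNonAssocSemiring A]
  [StarAddMonoid A]

lemma continuous_sandwich [IsTopologicalGroup G] [TopologicalSpace A] [ContinuousMul A]
    [ContinuousStar A]
    {α f β : G → A} (hα : Continuous α) (hf : Continuous f) (hβ : Continuous β) :
    Continuous (fun p : G × G ↦ star (α p.1) * f p.2 * β (p.2⁻¹ * p.1)) := by
  fun_prop

lemma hasCompactSupport_sandwich {α f : G → A} (β : G → A) (hα : HasCompactSupport α)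
    (hf : HasCompactSupport f) :
    HasCompactSupport (fun p : G × G ↦ star (α p.1) * f p.2 * β (p.2⁻¹ * p.1)) :=
  HasCompactSupport.mul_right (f' := fun p : G × G ↦ β (p.2⁻¹ * p.1))
    ((hα.comp_left (star_zero A)).mul_prod hf)

end Sandwich

theorem integral_star_apply_integral_eq_integral_sandwich
    {G : Type*} [Group G] [TopologicalSpace G] [IsTopologicalGroup G] [MeasurableSpace G]
    [BorelSpace G] (μ : Measure G) [IsFiniteMeasureOnCompacts μ]
    {A : Type*} [NonUnitalNormedRing A] [StarRing A] [ContinuousStar A] [NormedSpace ℂ A]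
    [CompleteSpace A]
    {H : Type*} [NormedAddCommGroup H] [InnerProductSpace ℂ H] [CompleteSpace H]
    (π : A →⋆ₙₐ[ℂ] (H →L[ℂ] H)) (hπ : Continuous π) {f α β : G → A}
    (hfc : Continuous f) (hfs : HasCompactSupport f)
    (hαc : Continuous α) (hαs : HasCompactSupport α) (hβc : Continuous β) (ξ : H) :
    ∫ t, (star (π (α t))) (∫ u, (π (f u)) ((π (β (u⁻¹ * t))) ξ) ∂μ) ∂μ
      = ∫ s, (π (∫ t, star (α t) * f s * β (s⁻¹ * t) ∂μ)) ξ ∂μ := by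
  let πξ : A →L[ℂ] H :=
    ContinuousLinearMap.apply ℂ H ξ ∘L ⟨(π : A →ₗ[ℂ] H →L[ℂ] H), hπ⟩
  have hπξ (a : A) : πξ a = π a ξ := rfl
  let k : G × G → A := fun p ↦ star (α p.1) * f p.2 * β (p.2⁻¹ * p.1)
  have hk : Continuous k := continuous_sandwich hαc hfc hβc
  have lhs_inner_integral (t : G) :
      star (π (α t)) (∫ u, π (f u) (π (β (u⁻¹ * t)) ξ) ∂μ) = ∫ u, πξ (k (t, u)) ∂μ := by
    have hint : Integrable (fun u ↦ π (f u) (π (β (u⁻¹ * t)) ξ)) μ :=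
      Continuous.integrable_of_hasCompactSupport (by fun_prop)
        (hfs.mono fun u hu hfu ↦ hu (by simp [hfu]))
    rw [← (star (π (α t))).integral_comp_comm hint]
    simp [hπξ, k, map_mul, map_star]
  have rhs_inner_integral (s : G) :
      π (∫ t, star (α t) * f s * β (s⁻¹ * t) ∂μ) ξ = ∫ t, πξ (k (t, s)) ∂μ := by
    have hint : Integrable (fun t ↦ k (t, s)) μ :=
      (hk.comp (by fun_prop)).integrable_of_hasCompactSupport
        (hαs.mono fun t ht hαt ↦ ht (by simp [k, hαt]))
    exact (πξ.integral_comp_comm hint).symm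
  simp only [lhs_inner_integral, rhs_inner_integral]
  exact integral_integral_swap_of_hasCompactSupport (f := fun t u ↦ πξ (k (t, u)))
    (πξ.continuous.comp hk) ((hasCompactSupport_sandwich β hαs hfs).comp_left πξ.map_zero)

theorem stmt_7_general
    {G : Type*} [Group G] [TopologicalSpace G] [IsTopologicalGroup G]
    [MeasurableSpace G] [BorelSpace G]
    (μ : Measure G) [μ.IsHaarMeasure]
    {A : Type*} [NonUnitalNormedRing A] [StarRing A] [CStarRing A]
    [NormedSpace ℂ A] [IsScalarTower ℂ A A] [SMulCommClass ℂ A A]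
    [StarModule ℂ A] [CompleteSpace A]
    {H : Type*} [NormedAddCommGroup H] [InnerProductSpace ℂ H] [CompleteSpace H]
    (π : A →⋆ₙₐ[ℂ] (H →L[ℂ] H))
    (f α β : G → A)
    (hfc : Continuous f) (hfs : HasCompactSupport f)
    (hαc : Continuous α) (hαs : HasCompactSupport α)
    (hβc : Continuous β)
    (ξ : H) :
    ∫ t, (star (π (α t))) (∫ u, (π (f u)) ((π (β (u⁻¹ * t))) ξ) ∂μ) ∂μ
      = ∫ s, (π (∫ t, star (α t) * f s * β (s⁻¹ * t) ∂μ)) ξ ∂μ :=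
  integral_star_apply_integral_eq_integral_sandwich μ π π.continuous_of_cstarRing hfc hfs hαc hαs
    hβc ξ

/-- Lemma 3.1 for the constant bundle with fibre `A`:
`V_α* μ_{λ,T}(f) V_β = μ_T(α·f·β)`, i.e. for every `ξ ∈ H`,
`∫ t, π(α t)* (∫ u, π(f u) π(β(u⁻¹t)) ξ ∂μ) ∂μ = ∫ s, π((α·f·β)(s)) ξ ∂μ`,
where `(α·f·β)(s) = ∫ t, (α t)⋆ f(s) β(s⁻¹t) ∂μ`. -/
theorem stmt_7
    {G : Type*} [Group G] [TopologicalSpace G] [IsTopologicalGroup G]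
    [LocallyCompactSpace G] [T2Space G] [MeasurableSpace G] [BorelSpace G]
    (μ : Measure G) [μ.IsHaarMeasure]
    {A : Type*} [NonUnitalNormedRing A] [StarRing A] [CStarRing A]
    [NormedSpace ℂ A] [IsScalarTower ℂ A A] [SMulCommClass ℂ A A]
    [StarModule ℂ A] [CompleteSpace A]
    {H : Type*} [NormedAddCommGroup H] [InnerProductSpace ℂ H] [CompleteSpace H]
    (π : A →⋆ₙₐ[ℂ] (H →L[ℂ] H))
    (f α β : G → A)
    (hfc : Continuous f) (hfs : HasCompactSupport f)
    (hαc : Continuous α) (hαs : HasCompactSupport α)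
    (hβc : Continuous β) (hβs : HasCompactSupport β)
    (ξ : H) :
    ∫ t, (star (π (α t))) (∫ u, (π (f u)) ((π (β (u⁻¹ * t))) ξ) ∂μ) ∂μ
      = ∫ s, (π (∫ t, star (α t) * f s * β (s⁻¹ * t) ∂μ)) ξ ∂μ :=
  stmt_7_general μ π f α β hfc hfs hαc hαs hβc ξ
end
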